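/- Let L_a, L_b, L_c be Lagrangians in (ℝ^{2n}, ω) and let (e_a, f_a), (e_b, f_b), (e_c, f_c) be symplectic bases such that L_a = Span(e_c) = Span(f_b) = Span(e_a + f_a), L_b = Span(e_a) = Span(f_c) = Span(e_b + f_b), and L_c = Span(e_b) = Span(f_a) = Span(e_c + f_c). Let A, B, C be the unique n×n matrices defined by f_b = −e_c·A, f_c = −e_a·B, f_a = −e_b·C. Then A, B, C are orthogonal matrices, C·B·A = −Id, and furthermore e_b = (e_c + f_c)·A, e_c = (e_a + f_a)·B, and e_a = (e_b + f_b)·C. -/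

import Mathlib

open Matrix

noncomputable section

/-- The symplectic vector space `ℝ^{2n}`, with coordinates indexed by `Fin n ⊕ Fin n`. -/
abbrev V2 (n : ℕ) : Type := (Fin n ⊕ Fin n) → ℝ

/-- The standard matrix `J = [[0, Id],[−Id, 0]]`. -/
def Jn (n : ℕ) : Matrix (Fin n ⊕ Fin n) (Fin n ⊕ Fin n) ℝ :=
  Matrix.fromBlocks 0 1 (-1) 0

/-- The standard symplectic form `ω(x,y) = ᵀx J y` on `ℝ^{2n}`. -/
def omegaForm (n : ℕ) (x y : V2 n) : ℝ := x ⬝ᵥ (Jn n).mulVec y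

/-- A subspace is Lagrangian if it has dimension `n` and `ω` vanishes on it. -/
def IsLagrangian (n : ℕ) (L : Submodule ℝ (V2 n)) : Prop :=
  Module.finrank ℝ L = n ∧ ∀ x ∈ L, ∀ y ∈ L, omegaForm n x y = 0

/-- Membership in `Sp(2n,ℝ)`: `ᵀg J g = J`. -/
def IsSymplectic (n : ℕ) (g : Matrix (Fin n ⊕ Fin n) (Fin n ⊕ Fin n) ℝ) : Prop :=
  gᵀ * Jn n * g = Jn n

/-- `φ : L → L'` is the map whose graph is `M`, i.e. `M = {e + φ e : e ∈ L}`. -/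
def IsGraphMap (n : ℕ) (L M L' : Submodule ℝ (V2 n)) (φ : L →ₗ[ℝ] L') : Prop :=
  ∀ x : V2 n, x ∈ M ↔ ∃ e : L, x = (e : V2 n) + (φ e : V2 n)

/-- `tmul v g` is the tuple `v·g`, with `(v·g)_j = Σ_i g_{ij} • v_i`. -/
def tmul (n : ℕ) (v : Fin n → V2 n) (g : Matrix (Fin n) (Fin n) ℝ) : Fin n → V2 n :=
  fun j => ∑ i, g i j • v i

/-- A symplectic basis of `ℝ^{2n}`: a pair of `n`-tuples forming a basis, with
`ω(e_i,e_j) = ω(f_i,f_j) = 0` and `ω(e_i,f_j) = δ_{ij}`. -/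
def IsSymplecticBasis (n : ℕ) (e f : Fin n → V2 n) : Prop :=
  (∀ i j, omegaForm n (e i) (e j) = 0) ∧ (∀ i j, omegaForm n (f i) (f j) = 0) ∧
  (∀ i j, omegaForm n (e i) (f j) = if i = j then 1 else 0) ∧
  LinearIndependent ℝ (Sum.elim e f) ∧
  Submodule.span ℝ (Set.range (Sum.elim e f)) = ⊤

/-!
Write `ω(u, v)` for the matrix `(ω(u_i, v_j))_{ij}` of two tuples and put `P = ω(e_c, e_a)`,
`Q = ω(e_a, e_b)`, `R = ω(e_b, e_c)`. The pairings `ω(e_c, f_c) = 1`, ... together with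
`f_c = -e_a·B`, ... give `P B = Q C = R A = -1`, and the isotropy of `L_a ∋ e_c, e_a + f_a` and its
cyclic shifts gives `P = -ᵀR C`, `Q = -ᵀP A`, `R = -ᵀQ B`. Substituting, `R = ᵀA P B = -ᵀA`, so `A`
is orthogonal, and cyclically so are `B` and `C`; then `R = C B` turns `R A = -1` into
`C B A = -1`. Finally, expanding `e_b + f_b ∈ L_b = Span(f_c)` in the basis `f_c` dual to `e_c`
gives `e_b + f_b = f_c·ω(e_c, e_b + f_b) = f_c·A`, which with `f_b = -e_c·A` is
`e_b = (e_c + f_c)·A`.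
-/

namespace Matrix

variable {m α : Type*} [Fintype m] [DecidableEq m] [CommRing α]

theorem eq_neg_transpose_of_mul_eq_neg_one {R A : Matrix m m α} (hA : Aᵀ * A = 1)
    (hRA : R * A = -1) : R = -Aᵀ := by
  have hR : (-R) * A = 1 := by rw [neg_mul, hRA, neg_neg]
  rw [← inv_eq_left_inv hA, inv_eq_left_inv hR, neg_neg]

theorem transpose_mul_self_eq_one_of_cyclic_relations {P Q R A B : Matrix m m α}
    (hPB : P * B = -1) (hRA : R * A = -1) (hQ : Q = -(Pᵀ * A)) (hR : R = -(Qᵀ * B)) :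
    Aᵀ * A = 1 := by
  have hR' : R = -Aᵀ := by
    rw [hR, hQ, transpose_neg, transpose_mul, transpose_transpose, neg_mul, neg_neg, mul_assoc,
      hPB, mul_neg, mul_one]
  rwa [hR', neg_mul, neg_inj] at hRA

theorem orthogonal_of_cyclic_relations {P Q R A B C : Matrix m m α}
    (hPB : P * B = -1) (hQC : Q * C = -1) (hRA : R * A = -1)
    (hP : P = -(Rᵀ * C)) (hQ : Q = -(Pᵀ * A)) (hR : R = -(Qᵀ * B)) :
    Aᵀ * A = 1 ∧ Bᵀ * B = 1 ∧ Cᵀ * C = 1 ∧ C * B * A = -1 := by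
  have hC := transpose_mul_self_eq_one_of_cyclic_relations hRA hQC hP hQ
  refine ⟨transpose_mul_self_eq_one_of_cyclic_relations hPB hRA hQ hR,
    transpose_mul_self_eq_one_of_cyclic_relations hQC hPB hR hP, hC, ?_⟩
  rw [hR, eq_neg_transpose_of_mul_eq_neg_one hC hQC, transpose_neg, transpose_transpose] at hRA
  simpa only [neg_mul, neg_neg] using hRA

end Matrix

theorem Jn_transpose (n : ℕ) : (Jn n)ᵀ = -Jn n := by
  rw [Jn, fromBlocks_transpose, fromBlocks_neg]
  simp

theorem omegaForm_eq_toLinearMap₂' (n : ℕ) (x y : V2 n) :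
    omegaForm n x y = Matrix.toLinearMap₂' ℝ (Jn n) x y :=
  (Matrix.toLinearMap₂'_apply' _ _ _).symm

theorem omegaForm_swap (n : ℕ) (x y : V2 n) : omegaForm n y x = -omegaForm n x y := by
  rw [omegaForm, omegaForm, dotProduct_mulVec, dotProduct_comm, ← mulVec_transpose, Jn_transpose,
    neg_mulVec, dotProduct_neg]

theorem tmul_add_left (n : ℕ) (u v : Fin n → V2 n) (g : Matrix (Fin n) (Fin n) ℝ) :
    tmul n (u + v) g = tmul n u g + tmul n v g := by
  ext j : 1
  simp only [tmul, Pi.add_apply, smul_add, Finset.sum_add_distrib]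

def omegaGram (n : ℕ) (u v : Fin n → V2 n) : Matrix (Fin n) (Fin n) ℝ :=
  of fun i j => omegaForm n (u i) (v j)

section omegaGram

variable {n : ℕ} {e f u v w : Fin n → V2 n}

@[simp]
theorem omegaGram_apply (i j : Fin n) : omegaGram n u v i j = omegaForm n (u i) (v j) := rfl

theorem omegaGram_add_right : omegaGram n u (v + w) = omegaGram n u v + omegaGram n u w := by
  ext i j
  simp [omegaForm_eq_toLinearMap₂']

theorem omegaGram_neg_right : omegaGram n u (-v) = -omegaGram n u v := by
  ext i j
  simp [omegaForm_eq_toLinearMap₂']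

theorem omegaGram_tmul_right (g : Matrix (Fin n) (Fin n) ℝ) :
    omegaGram n u (tmul n v g) = omegaGram n u v * g := by
  ext i j
  simp [tmul, omegaForm_eq_toLinearMap₂', mul_apply, mul_comm]

theorem omegaGram_transpose : (omegaGram n u v)ᵀ = -omegaGram n v u := by
  ext i j
  simp [omegaForm_swap n (v i)]

theorem omegaGram_eq_zero_of_forall_mem {L : Submodule ℝ (V2 n)}
    (hL : ∀ x ∈ L, ∀ y ∈ L, omegaForm n x y = 0) (hu : ∀ i, u i ∈ L) (hv : ∀ j, v j ∈ L) :
    omegaGram n u v = 0 := by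
  ext i j
  exact hL _ (hu i) _ (hv j)

theorem IsSymplecticBasis.omegaGram_eq_one (h : IsSymplecticBasis n e f) :
    omegaGram n e f = 1 := by
  ext i j
  simp [h.2.2.1, one_apply]

theorem eq_tmul_omegaGram_of_forall_mem_span (hef : omegaGram n e f = 1)
    (hw : ∀ j, w j ∈ Submodule.span ℝ (Set.range f)) : w = tmul n f (omegaGram n e w) := by
  choose c hc using fun j => (Submodule.mem_span_range_iff_exists_fun ℝ).mp (hw j)
  have hw' : w = tmul n f (of fun i j => c j i) := funext fun j => (hc j).symm
  rw [hw', omegaGram_tmul_right, hef, one_mul]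

theorem omegaGram_mul_eq_neg_one_of_eq_neg_tmul {g : Matrix (Fin n) (Fin n) ℝ}
    (hef : omegaGram n e f = 1) (hf : f = -tmul n u g) : omegaGram n e u * g = -1 := by
  rwa [hf, omegaGram_neg_right, omegaGram_tmul_right, neg_eq_iff_eq_neg] at hef

theorem omegaGram_eq_of_mul_eq_neg_one {g : Matrix (Fin n) (Fin n) ℝ} (hg : gᵀ * g = 1)
    (h : omegaGram n u v * g = -1) : omegaGram n v u = g := by
  rw [← transpose_transpose (omegaGram n v u), omegaGram_transpose,
    Matrix.eq_neg_transpose_of_mul_eq_neg_one hg h, neg_neg, transpose_transpose]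

theorem omegaGram_eq_neg_transpose_mul_of_forall_mem {L : Submodule ℝ (V2 n)}
    {g : Matrix (Fin n) (Fin n) ℝ} (hL : ∀ x ∈ L, ∀ y ∈ L, omegaForm n x y = 0)
    (hu : ∀ i, u i ∈ L) (hef : ∀ i, (e + f) i ∈ L) (hf : f = -tmul n v g) :
    omegaGram n u e = -((omegaGram n v u)ᵀ * g) := by
  have h := omegaGram_eq_zero_of_forall_mem hL hu hef
  rwa [omegaGram_add_right, hf, omegaGram_neg_right, omegaGram_tmul_right,
    ← neg_neg (omegaGram n u v), ← omegaGram_transpose, neg_mul, neg_neg,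
    add_eq_zero_iff_eq_neg] at h

theorem eq_tmul_add_of_forall_add_mem_span {g : Matrix (Fin n) (Fin n) ℝ}
    (hef : omegaGram n e f = 1) (huv : ∀ j, (u + v) j ∈ Submodule.span ℝ (Set.range f))
    (hu : omegaGram n e u = g) (hv : omegaGram n e v = 0) (hvg : v = -tmul n e g) :
    u = tmul n (e + f) g := by
  have h := eq_tmul_omegaGram_of_forall_mem_span hef huv
  rw [omegaGram_add_right, hu, hv, add_zero] at h
  rw [tmul_add_left, ← h, hvg]
  abel

end omegaGram

theorem triple_of_lagrangians_matrices (n : ℕ)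
    (La Lb Lc : Submodule ℝ (V2 n))
    (hLa : IsLagrangian n La) (hLb : IsLagrangian n Lb) (hLc : IsLagrangian n Lc)
    (ea fa eb fb ec fc : Fin n → V2 n)
    (ha : IsSymplecticBasis n ea fa) (hb : IsSymplecticBasis n eb fb)
    (hc : IsSymplecticBasis n ec fc)
    (hLa1 : La = Submodule.span ℝ (Set.range ec))
    (hLa2 : La = Submodule.span ℝ (Set.range fb))
    (hLa3 : La = Submodule.span ℝ (Set.range (ea + fa)))
    (hLb1 : Lb = Submodule.span ℝ (Set.range ea))
    (hLb2 : Lb = Submodule.span ℝ (Set.range fc))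
    (hLb3 : Lb = Submodule.span ℝ (Set.range (eb + fb)))
    (hLc1 : Lc = Submodule.span ℝ (Set.range eb))
    (hLc2 : Lc = Submodule.span ℝ (Set.range fa))
    (hLc3 : Lc = Submodule.span ℝ (Set.range (ec + fc)))
    (A B C : Matrix (Fin n) (Fin n) ℝ)
    (hA : fb = -(tmul n ec A)) (hB : fc = -(tmul n ea B)) (hC : fa = -(tmul n eb C)) :
    Aᵀ * A = 1 ∧ Bᵀ * B = 1 ∧ Cᵀ * C = 1 ∧ C * B * A = -1 ∧
    eb = tmul n (ec + fc) A ∧ ec = tmul n (ea + fa) B ∧ ea = tmul n (eb + fb) C := by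
  have mem {L : Submodule ℝ (V2 n)} {v : Fin n → V2 n} (h : L = Submodule.span ℝ (Set.range v))
      (i : Fin n) : v i ∈ L :=
    h ▸ Submodule.subset_span ⟨i, rfl⟩
  have hPB := omegaGram_mul_eq_neg_one_of_eq_neg_tmul hc.omegaGram_eq_one hB
  have hQC := omegaGram_mul_eq_neg_one_of_eq_neg_tmul ha.omegaGram_eq_one hC
  have hRA := omegaGram_mul_eq_neg_one_of_eq_neg_tmul hb.omegaGram_eq_one hA
  obtain ⟨hAA, hBB, hCC, hCBA⟩ := Matrix.orthogonal_of_cyclic_relations hPB hQC hRA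
    (omegaGram_eq_neg_transpose_mul_of_forall_mem hLa.2 (mem hLa1) (mem hLa3) hC)
    (omegaGram_eq_neg_transpose_mul_of_forall_mem hLb.2 (mem hLb1) (mem hLb3) hA)
    (omegaGram_eq_neg_transpose_mul_of_forall_mem hLc.2 (mem hLc1) (mem hLc3) hB)
  refine ⟨hAA, hBB, hCC, hCBA, ?_, ?_, ?_⟩
  · exact eq_tmul_add_of_forall_add_mem_span hc.omegaGram_eq_one (mem (hLb2.symm.trans hLb3))
      (omegaGram_eq_of_mul_eq_neg_one hAA hRA)
      (omegaGram_eq_zero_of_forall_mem hLa.2 (mem hLa1) (mem hLa2)) hA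
  · exact eq_tmul_add_of_forall_add_mem_span ha.omegaGram_eq_one (mem (hLc2.symm.trans hLc3))
      (omegaGram_eq_of_mul_eq_neg_one hBB hPB)
      (omegaGram_eq_zero_of_forall_mem hLb.2 (mem hLb1) (mem hLb2)) hB
  · exact eq_tmul_add_of_forall_add_mem_span hb.omegaGram_eq_one (mem (hLa2.symm.trans hLa3))
      (omegaGram_eq_of_mul_eq_neg_one hCC hQC)
      (omegaGram_eq_zero_of_forall_mem hLc.2 (mem hLc1) (mem hLc2)) hC
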